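/- For each fixed t > 0, the map (x,y,z) ↦ ((x/√(-z))(z²+4t)^{1/4}, (y/√(-z))(z²+4t)^{1/4}, −√(z²+4t)), defined on the open lower paraboloid {(x,y,z) : z < 0, x² + y² < -z}, is injective and has Jacobian determinant equal to 1 at every point of its domain. -/

import Mathlib

/-!
The map has the form `(x, y, z) ↦ (x φ(z), y φ(z), ψ(z))` with
`φ(z) = (z² + 4t)^{1/4} / √(-z)` and `ψ(z) = -√(z² + 4t)`. Such a map is injective as soon as `ψ`
is injective and `φ` does not vanish, and its Jacobian matrix is triangular with diagonal
`(φ, φ, ψ')`. Here `ψ` is strictly increasing on `z < 0`, and `φ(z)² ψ'(z)` equals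
`(√(z² + 4t) / (-z)) · (-z / √(z² + 4t)) = 1`.
-/

open Real

/-- The time-`t` map of the flow on the open lower paraboloid. -/
noncomputable def Ft (t : ℝ) (p : ℝ × ℝ × ℝ) : ℝ × ℝ × ℝ :=
  (p.1 / Real.sqrt (-p.2.2) * (p.2.2 ^ 2 + 4 * t) ^ ((1 : ℝ) / 4),
   p.2.1 / Real.sqrt (-p.2.2) * (p.2.2 ^ 2 + 4 * t) ^ ((1 : ℝ) / 4),
   -Real.sqrt (p.2.2 ^ 2 + 4 * t))

namespace LinearMap

variable {R M M' : Type*} [CommRing R] [AddCommGroup M] [Module R M] [AddCommGroup M']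
  [Module R M'] [Module.Free R M] [Module.Finite R M] [Module.Free R M'] [Module.Finite R M']

theorem det_prodMap_add_inl_comp_snd (A : Module.End R M) (B : M' →ₗ[R] M)
    (C : Module.End R M') :
    (A.prodMap C + inl R M M' ∘ₗ B ∘ₗ snd R M M').det = A.det * C.det := by
  classical
  let b := Module.Free.chooseBasis R M
  let b' := Module.Free.chooseBasis R M'
  have hB : toMatrix (b.prod b') (b.prod b') (inl R M M' ∘ₗ B ∘ₗ snd R M M') =
      Matrix.fromBlocks 0 (toMatrix b' b B) 0 0 := by
    ext (i | i) (j | j) <;> simp [toMatrix_apply]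
  rw [← det_toMatrix (b.prod b'), map_add, toMatrix_prodMap, hB, Matrix.fromBlocks_add,
    add_zero, add_zero, zero_add, add_zero, Matrix.det_fromBlocks_zero₂₁, det_toMatrix,
    det_toMatrix]

end LinearMap

section FibredScaling

def fibredScaling {α : Type*} [Mul α] (φ ψ : α → α) (p : α × α × α) : α × α × α :=
  (p.1 * φ p.2.2, p.2.1 * φ p.2.2, ψ p.2.2)

theorem injOn_fibredScaling {α : Type*} [Mul α] [Zero α] [IsRightCancelMulZero α]
    {φ ψ : α → α} {S : Set α} (hψ : S.InjOn ψ) (hφ : ∀ z ∈ S, φ z ≠ 0) :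
    {p : α × α × α | p.2.2 ∈ S}.InjOn (fibredScaling φ ψ) := by
  rintro ⟨x, y, z⟩ hz ⟨x', y', z'⟩ hz' h
  simp only [fibredScaling, Prod.mk.injEq] at h
  obtain ⟨hx, hy, hψz⟩ := h
  obtain rfl : z = z' := hψ hz hz' hψz
  simp [mul_right_cancel₀ (hφ z hz) hx, mul_right_cancel₀ (hφ z hz) hy]

variable {𝕜 : Type*} [NontriviallyNormedField 𝕜]

theorem det_fderiv_fibredScaling {φ ψ : 𝕜 → 𝕜} {ψ' : 𝕜} {p : 𝕜 × 𝕜 × 𝕜}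
    (hφ : DifferentiableAt 𝕜 φ p.2.2) (hψ : HasDerivAt ψ ψ' p.2.2) :
    (fderiv 𝕜 (fibredScaling φ ψ) p).det = φ p.2.2 ^ 2 * ψ' := by
  obtain ⟨x, y, z⟩ := p
  have hz : HasFDerivAt (fun q : 𝕜 × 𝕜 × 𝕜 => q.2.2) _ (x, y, z) :=
    (hasFDerivAt_snd (𝕜 := 𝕜) (E := 𝕜)).snd
  have hy : HasFDerivAt (fun q : 𝕜 × 𝕜 × 𝕜 => q.2.1) _ (x, y, z) :=
    (hasFDerivAt_snd (𝕜 := 𝕜) (E := 𝕜)).fst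
  have hφz := hφ.hasDerivAt.comp_hasFDerivAt (x, y, z) hz
  have hF : HasFDerivAt (fibredScaling φ ψ) _ _ := (hasFDerivAt_fst.mul hφz).prodMk
    ((hy.mul hφz).prodMk (hψ.comp_hasFDerivAt (x, y, z) hz))
  set a := φ z
  set b := deriv φ z
  -- block triangular for the splittings `x | (y, z)` and then `y | z`
  have h_triangular : (fderiv 𝕜 (fibredScaling φ ψ) (x, y, z) : 𝕜 × 𝕜 × 𝕜 →ₗ[𝕜] 𝕜 × 𝕜 × 𝕜) =
      (a • LinearMap.id).prodMap
        ((a • LinearMap.id).prodMap (ψ' • LinearMap.id) +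
          LinearMap.inl 𝕜 𝕜 𝕜 ∘ₗ ((y * b) • LinearMap.id) ∘ₗ LinearMap.snd 𝕜 𝕜 𝕜) +
      LinearMap.inl 𝕜 𝕜 (𝕜 × 𝕜) ∘ₗ ((x * b) • LinearMap.snd 𝕜 𝕜 𝕜) ∘ₗ
        LinearMap.snd 𝕜 𝕜 (𝕜 × 𝕜) := by
    rw [hF.fderiv]
    ext <;> simp [a, b]
  rw [ContinuousLinearMap.det, h_triangular, LinearMap.det_prodMap_add_inl_comp_snd,
    LinearMap.det_prodMap_add_inl_comp_snd]
  simp only [LinearMap.det_ring, LinearMap.smul_apply, LinearMap.id_coe, id_eq, smul_eq_mul,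
    mul_one, a]
  ring

end FibredScaling

namespace Ft

noncomputable def scale (t z : ℝ) : ℝ := (z ^ 2 + 4 * t) ^ ((1 : ℝ) / 4) / √(-z)

noncomputable def height (t z : ℝ) : ℝ := -√(z ^ 2 + 4 * t)

theorem eq_fibredScaling (t : ℝ) : Ft t = fibredScaling (scale t) (height t) := by
  ext p <;> simp [Ft, fibredScaling, scale, height, mul_div_assoc, div_mul_eq_mul_div]

variable {t z : ℝ}

theorem sq_add_four_mul_pos (ht : 0 ≤ t) (hz : z < 0) : 0 < z ^ 2 + 4 * t := by nlinarith

theorem scale_pos (ht : 0 ≤ t) (hz : z < 0) : 0 < scale t z :=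
  div_pos (rpow_pos_of_pos (sq_add_four_mul_pos ht hz) _) (sqrt_pos.2 (neg_pos.2 hz))

theorem scale_sq (ht : 0 ≤ t) (hz : z < 0) : scale t z ^ 2 = √(z ^ 2 + 4 * t) / -z := by
  rw [scale, div_pow, ← rpow_natCast, ← rpow_mul (sq_add_four_mul_pos ht hz).le,
    sq_sqrt (by linarith), sqrt_eq_rpow]
  norm_num

theorem differentiableAt_scale (ht : 0 ≤ t) (hz : z < 0) : DifferentiableAt ℝ (scale t) z := by
  unfold scale
  fun_prop (disch := first
    | exact (sq_add_four_mul_pos ht hz).ne'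
    | exact (sqrt_pos.2 (neg_pos.2 hz)).ne'
    | exact (neg_pos.2 hz).ne')

theorem hasDerivAt_height (ht : 0 ≤ t) (hz : z < 0) :
    HasDerivAt (height t) (-z / √(z ^ 2 + 4 * t)) z := by
  have h : HasDerivAt (fun s => s ^ 2 + 4 * t) (2 * z) z := by
    simpa using (hasDerivAt_pow 2 z).add_const (4 * t)
  have h' := (h.sqrt (sq_add_four_mul_pos ht hz).ne').neg
  rwa [mul_div_mul_left _ _ two_ne_zero, ← neg_div] at h'

theorem strictMonoOn_height (ht : 0 ≤ t) : StrictMonoOn (height t) (Set.Iic 0) := by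
  intro a ha b hb hab
  simp only [height, neg_lt_neg_iff]
  exact sqrt_lt_sqrt (by positivity) (by nlinarith [Set.mem_Iic.1 ha, Set.mem_Iic.1 hb])

end Ft

/-- For fixed `t > 0`, the time-`t` flow map on the open lower paraboloid is injective
and has Jacobian determinant `1` everywhere. -/
theorem flow_map_injective_jacobian_one (t : ℝ) (ht : 0 < t) :
    Set.InjOn (Ft t) {p : ℝ × ℝ × ℝ | p.2.2 < 0 ∧ p.1 ^ 2 + p.2.1 ^ 2 < -p.2.2} ∧
    ∀ p ∈ {p : ℝ × ℝ × ℝ | p.2.2 < 0 ∧ p.1 ^ 2 + p.2.1 ^ 2 < -p.2.2},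
      (fderiv ℝ (Ft t) p).det = 1 := by
  rw [Ft.eq_fibredScaling]
  refine ⟨?_, ?_⟩
  · have h_inj := injOn_fibredScaling
      ((Ft.strictMonoOn_height ht.le).mono Set.Iio_subset_Iic_self).injOn
      fun z hz => (Ft.scale_pos ht.le hz).ne'
    exact h_inj.mono fun p hp => hp.1
  · rintro p ⟨hz, -⟩
    rw [det_fderiv_fibredScaling (Ft.differentiableAt_scale ht.le hz)
      (Ft.hasDerivAt_height ht.le hz), Ft.scale_sq ht.le hz]
    have := sqrt_pos.2 (Ft.sq_add_four_mul_pos ht.le hz)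
    field_simp [hz.ne]
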